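/- Fix a prime p and an algebraic closure Ω of ℚ_p, with the unique absolute value ‖·‖ extending the p-adic absolute value. For every α ∈ Ω with ‖α‖ = 1 there exists a unique root of unity ζ ∈ Ω whose (multiplicative) order is coprime to p such that ‖α − ζ‖ < 1. -/

import Mathlib

/-!
Since `‖n‖ ≤ 1` for every integer `n`, the norm on `Ω` is ultrametric. The element `α` generates a
finite extension of `ℚ_p`, which is complete and locally compact, so the powers of `α` accumulate:
`‖α ^ d - 1‖ < 1` for some `d > 0`. Extracting `p`-th roots is harmless modulo the maximal ideal
(`(1 + h) ^ p ≡ 1 + h ^ p` modulo `p`), so we may take `d` prime to `p`, and then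
`q = p ^ φ(d)` satisfies `‖α ^ (q - 1) - 1‖ < 1`. The same congruence makes `x ↦ x ^ p` contract
near `1`, hence `α ^ q ^ k` is Cauchy and converges to a `ζ` with `ζ ^ q = ζ`, the Teichmüller
representative of `α`. Uniqueness: for two such roots of unity `y, ζ`, the quotient `ξ = y / ζ`
satisfies `ξ ^ n = 1` with `‖n‖ = 1` and `‖ξ - 1‖ < 1`; then `∑_{i < n} ξ ^ i ≡ n` is a unit,
and `(ξ - 1) * ∑_{i < n} ξ ^ i = 0` forces `ξ = 1`.
-/

open IsUltrametricDist Finset Filter Topology Metric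

lemma norm_pow_le_one {K : Type*} [NormedDivisionRing K] {x : K} (hx : ‖x‖ ≤ 1) (n : ℕ) :
    ‖x ^ n‖ ≤ 1 :=
  (norm_pow x n).trans_le (pow_le_one₀ (norm_nonneg x) hx)

namespace IsUltrametricDist

variable {K : Type*} [NormedField K] [IsUltrametricDist K]

lemma norm_sub_one_le_one {x : K} (hx : ‖x‖ ≤ 1) : ‖x - 1‖ ≤ 1 := by
  rw [sub_eq_add_neg]
  exact (norm_add_le_max x (-1)).trans (by simp [hx])

lemma norm_pow_sub_one_le {x : K} (hx : ‖x‖ ≤ 1) (n : ℕ) : ‖x ^ n - 1‖ ≤ ‖x - 1‖ := by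
  rw [← geom_sum_mul, norm_mul]
  exact mul_le_of_le_one_left (norm_nonneg _)
    (norm_sum_le_of_forall_le_of_nonneg zero_le_one fun i _ => norm_pow_le_one hx i)

lemma eq_one_of_pow_eq_one_of_norm_sub_one_lt_one {n : ℕ} (hn : ‖(n : K)‖ = 1) {x : K}
    (hxn : x ^ n = 1) (hx : ‖x - 1‖ < 1) : x = 1 := by
  have hx1 : ‖x‖ ≤ 1 := by
    simpa using (norm_add_le_max (x - 1) 1).trans (max_le hx.le norm_one.le)
  have hsum : ‖∑ i ∈ range n, x ^ i - n‖ < 1 := by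
    have : ∑ i ∈ range n, x ^ i - n = ∑ i ∈ range n, (x ^ i - 1) := by simp
    rw [this]
    exact (norm_sum_le_of_forall_le_of_nonneg (norm_nonneg _)
      fun i _ => norm_pow_sub_one_le hx1 i).trans_lt hx
  have hsum0 : ∑ i ∈ range n, x ^ i ≠ 0 := fun h0 => by
    rw [h0, zero_sub, norm_neg, hn] at hsum
    exact hsum.false
  have := geom_sum_mul x n
  rw [hxn, sub_self, mul_eq_zero] at this
  exact sub_eq_zero.1 (this.resolve_left hsum0)

lemma eq_of_pow_eq_one_of_norm_sub_lt_one {n : ℕ} (hn : ‖(n : K)‖ = 1) {x y : K}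
    (hx : x ^ n = 1) (hy : y ^ n = 1) (hxy : ‖x - y‖ < 1) : x = y := by
  have hn0 : n ≠ 0 := by rintro rfl; simp at hn
  have hy0 : y ≠ 0 := by rintro rfl; simp [hn0] at hy
  have hy1 : ‖y‖ = 1 :=
    (isOfFinOrder_iff_pow_eq_one.2 ⟨n, Nat.pos_of_ne_zero hn0, hy⟩).norm_eq_one
  refine (div_eq_one_iff_eq hy0).1 (eq_one_of_pow_eq_one_of_norm_sub_one_lt_one hn
    (by rw [div_pow, hx, hy, div_one]) ?_)
  rwa [div_sub_one hy0, norm_div, hy1, div_one]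

lemma eq_of_orderOf_coprime_of_norm_sub_lt_one {p : ℕ}
    (hK : ∀ n : ℕ, n.Coprime p → ‖(n : K)‖ = 1) {x y : K} (hx : (orderOf x).Coprime p)
    (hy : (orderOf y).Coprime p) (hxy : ‖x - y‖ < 1) : x = y :=
  eq_of_pow_eq_one_of_norm_sub_lt_one (hK _ (hx.mul_left hy))
    (by rw [pow_mul, pow_orderOf_eq_one, one_pow])
    (by rw [mul_comm, pow_mul, pow_orderOf_eq_one, one_pow]) hxy

variable {p : ℕ}

lemma norm_add_one_pow_sub_pow_sub_one_le (hp : p.Prime) {h : K} (hh : ‖h‖ ≤ 1) :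
    ‖(h + 1) ^ p - h ^ p - 1‖ ≤ ‖(p : K)‖ * ‖h‖ := by
  have hexp : (h + 1) ^ p - h ^ p - 1 = ∑ k ∈ (range p).erase 0, h ^ k * (p.choose k : K) := by
    rw [add_pow, sum_range_succ, ← add_sum_erase _ _ (mem_range.2 hp.pos)]
    simp
  rw [hexp]
  refine norm_sum_le_of_forall_le_of_nonneg (by positivity) fun k hk => ?_
  obtain ⟨hk0, hkp⟩ := mem_erase.1 hk
  obtain ⟨s, hs⟩ := hp.dvd_choose_self hk0 (mem_range.1 hkp)
  rw [hs, Nat.cast_mul, norm_mul, norm_mul, norm_pow, mul_comm]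
  calc ‖(p : K)‖ * ‖(s : K)‖ * ‖h‖ ^ k ≤ ‖(p : K)‖ * 1 * ‖h‖ := by
        gcongr
        · exact norm_natCast_le_one K s
        · exact pow_le_of_le_one (norm_nonneg h) hh hk0
    _ = ‖(p : K)‖ * ‖h‖ := by rw [mul_one]

lemma norm_pow_prime_sub_one_le (hp : p.Prime) {x : K} (hx : ‖x‖ ≤ 1) :
    ‖x ^ p - 1‖ ≤ max ‖x - 1‖ ‖(p : K)‖ * ‖x - 1‖ := by
  have hx1 := norm_sub_one_le_one hx
  calc ‖x ^ p - 1‖ = ‖(x - 1) ^ p + ((x - 1 + 1) ^ p - (x - 1) ^ p - 1)‖ := by ring_nf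
    _ ≤ max ‖(x - 1) ^ p‖ ‖(x - 1 + 1) ^ p - (x - 1) ^ p - 1‖ := norm_add_le_max _ _
    _ ≤ max (‖x - 1‖ * ‖x - 1‖) (‖(p : K)‖ * ‖x - 1‖) := by
        refine max_le_max ?_ (norm_add_one_pow_sub_pow_sub_one_le hp hx1)
        rw [norm_pow, ← sq]
        exact pow_le_pow_of_le_one (norm_nonneg _) hx1 hp.two_le
    _ = max ‖x - 1‖ ‖(p : K)‖ * ‖x - 1‖ := (max_mul_of_nonneg _ _ (norm_nonneg _)).symm

lemma norm_pow_prime_pow_sub_one_le (hp : p.Prime) {x : K} (hx : ‖x‖ ≤ 1) (j : ℕ) :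
    ‖x ^ p ^ j - 1‖ ≤ max ‖x - 1‖ ‖(p : K)‖ ^ j * ‖x - 1‖ := by
  induction j with
  | zero => simp
  | succ j ih =>
    calc ‖x ^ p ^ (j + 1) - 1‖ = ‖(x ^ p ^ j) ^ p - 1‖ := by rw [pow_succ, pow_mul]
      _ ≤ max ‖x ^ p ^ j - 1‖ ‖(p : K)‖ * ‖x ^ p ^ j - 1‖ :=
          norm_pow_prime_sub_one_le hp (norm_pow_le_one hx _)
      _ ≤ max ‖x - 1‖ ‖(p : K)‖ * (max ‖x - 1‖ ‖(p : K)‖ ^ j * ‖x - 1‖) := by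
          gcongr
          exact norm_pow_sub_one_le hx _
      _ = max ‖x - 1‖ ‖(p : K)‖ ^ (j + 1) * ‖x - 1‖ := by ring

lemma norm_sub_one_lt_one_of_norm_pow_prime_sub_one_lt_one (hp : p.Prime)
    (hpK : ‖(p : K)‖ < 1) {x : K} (hx : ‖x‖ ≤ 1) (h : ‖x ^ p - 1‖ < 1) : ‖x - 1‖ < 1 := by
  have hx1 := norm_sub_one_le_one hx
  have hpow : ‖(x - 1) ^ p‖ < 1 :=
    calc ‖(x - 1) ^ p‖ = ‖(x ^ p - 1) + -((x - 1 + 1) ^ p - (x - 1) ^ p - 1)‖ := by ring_nf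
      _ ≤ max ‖x ^ p - 1‖ ‖(x - 1 + 1) ^ p - (x - 1) ^ p - 1‖ := by
          simpa only [norm_neg] using
            norm_add_le_max (x ^ p - 1) (-((x - 1 + 1) ^ p - (x - 1) ^ p - 1))
      _ < 1 := max_lt h ((norm_add_one_pow_sub_pow_sub_one_le hp hx1).trans_lt
          (mul_lt_one_of_nonneg_of_lt_one_left (norm_nonneg _) hpK hx1))
  rw [norm_pow] at hpow
  exact (pow_lt_one_iff_of_nonneg (norm_nonneg _) hp.ne_zero).1 hpow

lemma norm_sub_one_lt_one_of_norm_pow_prime_pow_sub_one_lt_one (hp : p.Prime)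
    (hpK : ‖(p : K)‖ < 1) {x : K} (hx : ‖x‖ ≤ 1) (a : ℕ) (h : ‖x ^ p ^ a - 1‖ < 1) :
    ‖x - 1‖ < 1 := by
  induction a with
  | zero => simpa using h
  | succ a ih =>
    refine ih (norm_sub_one_lt_one_of_norm_pow_prime_sub_one_lt_one hp hpK
      (norm_pow_le_one hx _) ?_)
    rwa [← pow_mul, ← pow_succ]

lemma exists_norm_pow_prime_pow_sub_one_sub_one_lt_one (hp : p.Prime) (hpK : ‖(p : K)‖ < 1)
    {α : K} (hα : ‖α‖ ≤ 1) {d : ℕ} (hd : 0 < d) (hαd : ‖α ^ d - 1‖ < 1) :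
    ∃ e ≠ 0, ‖α ^ (p ^ e - 1) - 1‖ < 1 := by
  obtain ⟨a, m, hpm, rfl⟩ := Nat.exists_eq_pow_mul_and_not_dvd hd.ne' p hp.ne_one
  have hm : 0 < m := Nat.pos_of_ne_zero (by rintro rfl; simp at hd)
  have hαm : ‖α ^ m - 1‖ < 1 := norm_sub_one_lt_one_of_norm_pow_prime_pow_sub_one_lt_one hp hpK
    (norm_pow_le_one hα m) a (by rwa [← pow_mul, mul_comm])
  obtain ⟨r, hr⟩ : m ∣ p ^ Nat.totient m - 1 := (Nat.modEq_iff_dvd' (Nat.one_le_pow _ _ hp.pos)).1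
    (Nat.ModEq.pow_totient ((hp.coprime_iff_not_dvd).2 hpm)).symm
  refine ⟨Nat.totient m, (Nat.totient_pos.2 hm).ne', ?_⟩
  rw [hr, pow_mul]
  exact (norm_pow_sub_one_le (norm_pow_le_one hα m) r).trans_lt hαm

lemma exists_pow_prime_pow_sub_one_eq_one_norm_sub_lt_one (hp : p.Prime) (hpK : ‖(p : K)‖ < 1)
    {s : Set K} (hs : IsComplete s) {α : K} (hαs : ∀ k, α ^ k ∈ s) (hα : ‖α‖ = 1)
    {e : ℕ} (he : e ≠ 0) (hαe : ‖α ^ (p ^ e - 1) - 1‖ < 1) :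
    ∃ ζ, ζ ^ (p ^ e - 1) = 1 ∧ ‖α - ζ‖ < 1 := by
  set q := p ^ e
  set c := ‖α ^ (q - 1) - 1‖
  set t := max c ‖(p : K)‖
  have ht : t < 1 := max_lt hαe hpK
  have hq : q ≠ 0 := pow_ne_zero e hp.ne_zero
  set w : ℕ → K := fun k => α ^ q ^ k
  have hw : ∀ k, w (k + 1) = w k ^ q := fun k => by simp only [w, pow_succ, pow_mul]
  have hwnorm : ∀ k, ‖w k‖ = 1 := fun k => by simp only [w, norm_pow, hα, one_pow]
  have hstep : ∀ k, ‖w (k + 1) - w k‖ ≤ c * (t ^ e) ^ k := fun k => by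
    have hexp : q ^ (k + 1) = q ^ k + (q - 1) * q ^ k := by
      rw [Nat.sub_one_mul, pow_succ',
        Nat.add_sub_cancel' (Nat.le_mul_of_pos_left _ (Nat.pos_of_ne_zero hq))]
    have : w (k + 1) - w k = w k * ((α ^ (q - 1)) ^ q ^ k - 1) := by
      show α ^ q ^ (k + 1) - α ^ q ^ k = α ^ q ^ k * ((α ^ (q - 1)) ^ q ^ k - 1)
      rw [mul_sub_one, ← pow_mul α, ← pow_add, ← hexp]
    rw [this, norm_mul, hwnorm, one_mul, ← pow_mul p e k]
    exact (norm_pow_prime_pow_sub_one_le hp (norm_pow_le_one hα.le _) (e * k)).trans_eq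
      (by rw [pow_mul]; ring)
  obtain ⟨ζ, -, hζ⟩ := cauchySeq_tendsto_of_isComplete hs (fun k => hαs _)
    (cauchySeq_of_le_geometric (t ^ e) c (pow_lt_one₀ (by positivity) ht he) fun k => by
      rw [dist_comm, dist_eq_norm]; exact hstep k)
  have hclose : ∀ k, ‖w k - α‖ ≤ c := fun k => by
    induction k with
    | zero =>
      simp only [w, pow_zero, pow_one, sub_self, norm_zero]
      exact norm_nonneg _
    | succ k ih =>
      rw [← sub_add_sub_cancel]
      refine (norm_add_le_max _ _).trans (max_le ((hstep k).trans ?_) ih)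
      exact mul_le_of_le_one_right (norm_nonneg _) (pow_le_one₀ (by positivity)
        (pow_le_one₀ (by positivity) ht.le))
  have hαζ : ‖α - ζ‖ < 1 := by
    rw [norm_sub_rev]
    exact (le_of_tendsto (hζ.sub_const α).norm (Eventually.of_forall hclose)).trans_lt hαe
  have hζq : ζ ^ q = ζ := tendsto_nhds_unique (hζ.pow q)
    ((hζ.comp (tendsto_add_atTop_nat 1)).congr fun k => hw k)
  have hζ0 : ζ ≠ 0 := by rintro rfl; simp [hα] at hαζ
  exact ⟨ζ, (mul_eq_right₀ hζ0).1 ((pow_sub_one_mul hq ζ).trans hζq), hαζ⟩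

theorem exists_orderOf_coprime_norm_sub_lt_one (hp : p.Prime) (hpK : ‖(p : K)‖ < 1)
    {s : Set K} (hs : IsComplete s) {α : K} (hαs : ∀ k, α ^ k ∈ s) (hα : ‖α‖ = 1)
    {d : ℕ} (hd : 0 < d) (hαd : ‖α ^ d - 1‖ < 1) :
    ∃ ζ, (0 < orderOf ζ ∧ (orderOf ζ).Coprime p) ∧ ‖α - ζ‖ < 1 := by
  obtain ⟨e, he, hαe⟩ := exists_norm_pow_prime_pow_sub_one_sub_one_lt_one hp hpK hα.le hd hαd
  obtain ⟨ζ, hζ, hαζ⟩ :=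
    exists_pow_prime_pow_sub_one_eq_one_norm_sub_lt_one hp hpK hs hαs hα he hαe
  have hcop : (p ^ e - 1).Coprime p :=
    ((Nat.coprime_self_sub_left (Nat.one_le_pow _ _ hp.pos)).2 (Nat.coprime_one_left _)
      |>.coprime_dvd_right (dvd_pow_self p he))
  refine ⟨ζ, ⟨orderOf_pos_iff.2 (isOfFinOrder_iff_pow_eq_one.2 ⟨_, ?_, hζ⟩),
    hcop.coprime_dvd_left (orderOf_dvd_of_pow_eq_one hζ)⟩, hαζ⟩
  exact Nat.sub_pos_of_lt (Nat.one_lt_pow he hp.one_lt)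

end IsUltrametricDist

lemma exists_pos_norm_pow_sub_one_lt_one {L : Type*} [NormedDivisionRing L] {s : Set L}
    (hs : IsCompact s) {α : L} (hαs : ∀ k, α ^ k ∈ s) (hα : ‖α‖ = 1) :
    ∃ d, 0 < d ∧ ‖α ^ d - 1‖ < 1 := by
  obtain ⟨_, -, φ, hφ, hlim⟩ := hs.tendsto_subseq hαs
  obtain ⟨N, hN⟩ := Metric.cauchySeq_iff'.1 hlim.cauchySeq 1 one_pos
  obtain ⟨d, hd⟩ := Nat.exists_eq_add_of_lt (hφ N.lt_succ_self)
  refine ⟨d + 1, d.succ_pos, ?_⟩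
  have := hN (N + 1) N.le_succ
  rwa [dist_eq_norm, Function.comp_apply, Function.comp_apply, hd, add_assoc, pow_add,
    ← mul_sub_one, norm_mul, norm_pow, hα, one_pow, one_mul] at this

section FiniteDimensional

variable {𝕜 L : Type*} [NontriviallyNormedField 𝕜] [NormedRing L] [NormedAlgebra 𝕜 L] {x : L}

lemma IsIntegral.isComplete_adjoin [CompleteSpace 𝕜] (hx : IsIntegral 𝕜 x) :
    IsComplete (Algebra.adjoin 𝕜 {x} : Set L) :=
  haveI : FiniteDimensional 𝕜 (Subalgebra.toSubmodule (Algebra.adjoin 𝕜 {x})) :=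
    .of_fg hx.fg_adjoin_singleton
  Submodule.complete_of_finiteDimensional (Subalgebra.toSubmodule (Algebra.adjoin 𝕜 {x}))

lemma IsIntegral.isCompact_adjoin_inter_closedBall [ProperSpace 𝕜] (hx : IsIntegral 𝕜 x)
    (r : ℝ) : IsCompact ((Algebra.adjoin 𝕜 {x} : Set L) ∩ closedBall 0 r) := by
  set S := Subalgebra.toSubmodule (Algebra.adjoin 𝕜 {x})
  have : FiniteDimensional 𝕜 S := .of_fg hx.fg_adjoin_singleton
  have : ProperSpace S := FiniteDimensional.proper 𝕜 S
  convert (isCompact_closedBall (0 : S) r).image continuous_subtype_val using 1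
  ext y
  simp [S, and_comm]

end FiniteDimensional

/-- In an algebraic closure `Ω` of `ℚ_p` with the absolute value extending the `p`-adic
one, every `α` with `‖α‖ = 1` is at distance `< 1` from a unique root of unity whose
order is coprime to `p`. -/
theorem stmt_9 (p : ℕ) [Fact p.Prime] (Ω : Type) [NormedField Ω]
    [Algebra ℚ_[p] Ω] [IsAlgClosure ℚ_[p] Ω]
    (hext : ∀ x : ℚ_[p], ‖algebraMap ℚ_[p] Ω x‖ = ‖x‖)
    (α : Ω) (hα : ‖α‖ = 1) :
    ∃! ζ : Ω, (0 < orderOf ζ ∧ Nat.Coprime (orderOf ζ) p) ∧ ‖α - ζ‖ < 1 := by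
  have hp : p.Prime := Fact.out
  have hnat : ∀ n : ℕ, ‖(n : Ω)‖ = ‖(n : ℚ_[p])‖ := fun n => by
    rw [← map_natCast (algebraMap ℚ_[p] Ω), hext]
  have : IsUltrametricDist Ω := isUltrametricDist_of_forall_norm_natCast_le_one fun n =>
    (hnat n).trans_le (norm_natCast_le_one ℚ_[p] n)
  let : NormedAlgebra ℚ_[p] Ω :=
    { norm_smul_le := fun c y => by rw [Algebra.smul_def, norm_mul, hext] }
  have hαint : IsIntegral ℚ_[p] α := (Algebra.IsAlgebraic.isAlgebraic α).isIntegral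
  have hαpow : ∀ k, α ^ k ∈ Algebra.adjoin ℚ_[p] {α} := fun k =>
    pow_mem (Algebra.self_mem_adjoin_singleton ℚ_[p] α) k
  obtain ⟨d, hd, hαd⟩ := exists_pos_norm_pow_sub_one_lt_one
    (hαint.isCompact_adjoin_inter_closedBall 1) (fun k => ⟨hαpow k, by simp [hα]⟩) hα
  obtain ⟨ζ, hζ, hαζ⟩ := exists_orderOf_coprime_norm_sub_lt_one hp
    ((hnat p).trans_lt Padic.norm_p_lt_one) hαint.isComplete_adjoin hαpow hα hd hαd
  refine ⟨ζ, ⟨hζ, hαζ⟩, fun y ⟨⟨_, hy⟩, hαy⟩ => ?_⟩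
  refine eq_of_orderOf_coprime_of_norm_sub_lt_one
    (fun n hn => (hnat n).trans (Padic.norm_natCast_eq_one_iff.2 hn.symm)) hy hζ.2 ?_
  rw [← sub_add_sub_cancel _ α]
  exact (norm_add_le_max _ _).trans_lt (max_lt (by rwa [norm_sub_rev]) hαζ)
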